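/- Let C ∈ SO₀(2,1) with c₁₁ > 1, and let C = s₁ k₁ be its unique decomposition with s₁ symmetric and k₁ = 1 ⊕ R(η) the rotation by angle η. Then cos η = (c₂₂ + c₃₃)/(1 + c₁₁) and sin η = (c₃₂ − c₂₃)/(1 + c₁₁). -/

import Mathlib

open Matrix
noncomputable def Imat : Matrix (Fin 3) (Fin 3) ℝ := diagonal ![-1, 1, 1]
noncomputable def amat : Matrix (Fin 3) (Fin 3) ℝ := !![0,1,0; 1,0,0; 0,0,0]
noncomputable def bmat : Matrix (Fin 3) (Fin 3) ℝ := !![0,0,1; 0,0,0; 1,0,0]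
noncomputable def cmat : Matrix (Fin 3) (Fin 3) ℝ := !![0,0,0; 0,0,-1; 0,1,0]
noncomputable def rot2 (η : ℝ) : Matrix (Fin 2) (Fin 2) ℝ :=
  !![Real.cos η, -Real.sin η; Real.sin η, Real.cos η]
noncomputable def Kmat (η : ℝ) : Matrix (Fin 3) (Fin 3) ℝ :=
  !![1,0,0; 0,Real.cos η,-Real.sin η; 0,Real.sin η,Real.cos η]
def inSO21 (C : Matrix (Fin 3) (Fin 3) ℝ) : Prop :=
  C⁻¹ = Imat * Cᵀ * Imat ∧ C.det = 1 ∧ 1 ≤ C 0 0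

/-!
Write a symmetric `s ∈ SO₀(2,1)` as `!![a, vᵀ; v, M]`. Since `s⁻¹ = I s I`, the relation
`s I s = I` says `|v|² = a² - 1`, `M v = a v` and `M² = 1 + v vᵀ`. Applying Cayley–Hamilton
`(tr M) M = M² + det M` to `v ≠ 0` gives `a tr M = det M + a²`, and expanding `det s = 1` along
the first row then forces `tr M = a + 1`. For `C = s K(η)` one has `c₁₁ = a`,
`c₂₂ + c₃₃ = tr M cos η` and `c₃₂ - c₂₃ = tr M sin η`.
-/

lemma Imat_mul_self : Imat * Imat = 1 := by
  rw [Imat, diagonal_mul_diagonal, ← diagonal_one]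
  congr 1
  ext i
  fin_cases i <;> norm_num

lemma mul_Imat_mul_self_of_isSymm {s : Matrix (Fin 3) (Fin 3) ℝ} (hsym : s.IsSymm)
    (hs : inSO21 s) : s * Imat * s = Imat := by
  have hinv : s * (Imat * s * Imat) = 1 := by
    have h := mul_nonsing_inv s (by rw [hs.2.1]; exact isUnit_one)
    rwa [hs.1, hsym.eq] at h
  calc s * Imat * s = s * (Imat * s * Imat) * Imat := by
        simp only [Matrix.mul_assoc, Imat_mul_self, Matrix.mul_one]
    _ = Imat := by rw [hinv, Matrix.one_mul]

theorem Matrix.IsSymm.apply_one_one_add_apply_two_two {R : Type*} [CommRing R] [IsDomain R]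
    {s : Matrix (Fin 3) (Fin 3) R} (hsym : s.IsSymm)
    (hL : s * diagonal ![-1, 1, 1] * s = diagonal ![-1, 1, 1]) (hdet : s.det = 1)
    (ha : s 0 0 ^ 2 ≠ 1) : s 1 1 + s 2 2 = s 0 0 + 1 := by
  have E := fun i j => congrFun (congrFun hL i) j
  have h00 := E 0 0
  have h01 := E 0 1
  have h02 := E 0 2
  have h11 := E 1 1
  have h12 := E 1 2
  have h22 := E 2 2
  simp only [mul_apply, Fin.sum_univ_three, diagonal_apply, cons_val_zero, cons_val_one, cons_val,
    Fin.reduceEq, if_true, if_false, mul_zero, add_zero, zero_add, hsym.apply 0 1, hsym.apply 0 2,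
    hsym.apply 1 2] at h00 h01 h02 h11 h12 h22
  rw [det_fin_three, hsym.apply 0 1, hsym.apply 0 2, hsym.apply 1 2] at hdet
  set a := s 0 0
  set b := s 0 1
  set c := s 0 2
  set d := s 1 1
  set e := s 1 2
  set f := s 2 2
  -- the two components of `(tr M) M v = M² v + (det M) v`, paired with `v`
  have hCH : (d + f) * a = (d * f - e ^ 2) + a ^ 2 := by
    refine mul_left_cancel₀ (sub_ne_zero.mpr ha) ?_
    linear_combination b * (-(d + f) * h01 + b * h11 + c * h12 + b * h00)
      + c * (-(d + f) * h02 + b * h12 + c * h22 + c * h00)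
      - ((d + f) * a - (d * f - e ^ 2) - a ^ 2) * h00
  linear_combination hdet + a * hCH + (d + f - a) * h00 - b * h01 - c * h02

section Kmat

variable (s : Matrix (Fin 3) (Fin 3) ℝ) (η : ℝ)

lemma mul_Kmat_apply_zero_zero : (s * Kmat η) 0 0 = s 0 0 := by
  simp [mul_apply, Fin.sum_univ_three, Kmat]

lemma mul_Kmat_apply_one_one_add_apply_two_two (hsym : s.IsSymm) :
    (s * Kmat η) 1 1 + (s * Kmat η) 2 2 = (s 1 1 + s 2 2) * Real.cos η := by
  simp only [mul_apply, Fin.sum_univ_three, Kmat, of_apply, cons_val', cons_val_zero, cons_val_one,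
    cons_val, cons_val_fin_one, hsym.apply 1 2]
  ring

lemma mul_Kmat_apply_two_one_sub_apply_one_two (hsym : s.IsSymm) :
    (s * Kmat η) 2 1 - (s * Kmat η) 1 2 = (s 1 1 + s 2 2) * Real.sin η := by
  simp only [mul_apply, Fin.sum_univ_three, Kmat, of_apply, cons_val', cons_val_zero, cons_val_one,
    cons_val, cons_val_fin_one, hsym.apply 1 2]
  ring

end Kmat

theorem stmt18_general (C s₁ : Matrix (Fin 3) (Fin 3) ℝ) (η : ℝ)
    (h11 : 1 < C 0 0)
    (hs₁ : s₁ᵀ = s₁) (hs₁SO : inSO21 s₁) (hfac : C = s₁ * Kmat η) :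
    Real.cos η = (C 1 1 + C 2 2) / (1 + C 0 0) ∧
    Real.sin η = (C 2 1 - C 1 2) / (1 + C 0 0) := by
  subst hfac
  rw [mul_Kmat_apply_zero_zero] at h11 ⊢
  have htrace : s₁ 1 1 + s₁ 2 2 = 1 + s₁ 0 0 := by
    rw [add_comm 1]
    exact IsSymm.apply_one_one_add_apply_two_two hs₁ (mul_Imat_mul_self_of_isSymm hs₁ hs₁SO)
      hs₁SO.2.1 (one_lt_pow₀ h11 two_ne_zero).ne'
  have hden : 1 + s₁ 0 0 ≠ 0 := by linarith
  rw [mul_Kmat_apply_one_one_add_apply_two_two _ _ hs₁,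
    mul_Kmat_apply_two_one_sub_apply_one_two _ _ hs₁, htrace]
  exact ⟨(mul_div_cancel_left₀ _ hden).symm, (mul_div_cancel_left₀ _ hden).symm⟩

theorem stmt18 (C s₁ : Matrix (Fin 3) (Fin 3) ℝ) (η : ℝ)
    (hC : inSO21 C) (h11 : 1 < C 0 0)
    (hs₁ : s₁ᵀ = s₁) (hs₁SO : inSO21 s₁) (hfac : C = s₁ * Kmat η) :
    Real.cos η = (C 1 1 + C 2 2) / (1 + C 0 0) ∧
    Real.sin η = (C 2 1 - C 1 2) / (1 + C 0 0) :=
  stmt18_general C s₁ η h11 hs₁ hs₁SO hfac
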